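/- Under assumptions (A2) and (A3), suppose α ≥ 2·N·L̄/(1−γ). Along any closed-loop trajectory (x_k, z_k), if at two consecutive instants the contraction internal state is below the Lyapunov level, i.e. W(x_k) > z_k and W(x_{k+1}) > z_{k+1}, then the optimal value decreases: J*(x_{k+1}, z_{k+1}) ≤ J*(x_k, z_k) − z_k·Q(x_{k+1}). -/
import Mathlib


open Filter Topology

noncomputable section

/-- The state space `ℝⁿ` with the Euclidean norm. -/
abbrev Euc (n : ℕ) := EuclideanSpace ℝ (Fin n)

/-- Predicted trajectory: `traj f x u ℓ` is the state `x^u_ℓ(x)` reached `ℓ` steps ahead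
starting from `x` and applying the controls `u 0, u 1, …` (so `traj f x u 0 = x` and
`x^u_1(x) = f x (u 0)`). -/
def traj {n m : ℕ} (f : Euc n → Euc m → Euc n) (x : Euc n) (u : ℕ → Euc m) : ℕ → Euc n
  | 0 => x
  | ℓ + 1 => f (traj f x u ℓ) (u ℓ)

/-- `Φ(x,u,q) = Σ_{ℓ=1}^q L(x^u_ℓ(x), u_ℓ)`. -/
def Phi {n m : ℕ} (f : Euc n → Euc m → Euc n) (L : Euc n → Euc m → ℝ)
    (x : Euc n) (u : ℕ → Euc m) (q : ℕ) : ℝ :=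
  ∑ i ∈ Finset.range q, L (traj f x u (i + 1)) (u i)

/-- `W̲(x,u,q) = min_{1 ≤ ℓ ≤ q} W(x^u_ℓ(x))`. -/
def Wlow {n m : ℕ} (f : Euc n → Euc m → Euc n) (W : Euc n → ℝ)
    (x : Euc n) (u : ℕ → Euc m) (q : ℕ) : ℝ :=
  sInf ((fun ℓ => W (traj f x u ℓ)) '' Set.Icc 1 q)

/-- The cost `J^{(x,z)}(u,q) = z·Φ(x,u,q) + α·W̲(x,u,q)`. -/
def Jcost {n m : ℕ} (f : Euc n → Euc m → Euc n) (L : Euc n → Euc m → ℝ) (W : Euc n → ℝ)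
    (α : ℝ) (x : Euc n) (z : ℝ) (u : ℕ → Euc m) (q : ℕ) : ℝ :=
  z * Phi f L x u q + α * Wlow f W x u q

/-- A pair `(u, q)` is feasible for `P(x,z)`: controls in `𝕌`, horizon `1 ≤ q ≤ N`, and the
predicted states over the horizon stay in `𝔾`. -/
def Feasible {n m : ℕ} (f : Euc n → Euc m → Euc n) (𝕌 : Set (Euc m)) (𝔾 : Set (Euc n))
    (N : ℕ) (x : Euc n) (u : ℕ → Euc m) (q : ℕ) : Prop :=
  (∀ i, u i ∈ 𝕌) ∧ 1 ≤ q ∧ q ≤ N ∧ ∀ ℓ ∈ Set.Icc 1 q, traj f x u ℓ ∈ 𝔾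

/-- `J*(x,z)`: the infimum of the cost over feasible pairs. -/
def Jstar {n m : ℕ} (f : Euc n → Euc m → Euc n) (𝕌 : Set (Euc m)) (𝔾 : Set (Euc n))
    (N : ℕ) (L : Euc n → Euc m → ℝ) (W : Euc n → ℝ) (α : ℝ) (x : Euc n) (z : ℝ) : ℝ :=
  sInf {c | ∃ u q, Feasible f 𝕌 𝔾 N x u q ∧ c = Jcost f L W α x z u q}

/-- Assumption (A2): `W` is continuous and positive definite, `γ ∈ (0,1)`, `N ≥ 1`, and from
every admissible state there is an admissible control sequence contracting `W` by `γ`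
within `N` steps. -/
def A2 {n m : ℕ} (f : Euc n → Euc m → Euc n) (𝕌 : Set (Euc m)) (𝔾 : Set (Euc n))
    (W : Euc n → ℝ) (γ : ℝ) (N : ℕ) : Prop :=
  Continuous W ∧ W 0 = 0 ∧ (∀ x, x ≠ 0 → 0 < W x) ∧ γ ∈ Set.Ioo (0 : ℝ) 1 ∧ 1 ≤ N ∧
    ∀ x ∈ 𝔾, ∃ u : ℕ → Euc m, (∀ i, u i ∈ 𝕌) ∧ (∀ ℓ ∈ Set.Icc 1 N, traj f x u ℓ ∈ 𝔾) ∧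
      Wlow f W x u N ≤ γ * W x

/-- Assumption (A3): the stage cost `L` satisfies `0 ≤ L ≤ L̄` on `𝔾 × 𝕌`, and
`Q(x) := L(x,0)` is positive definite with `Q(x) ≤ L(x,u)` for all `u`. -/
def A3 {n m : ℕ} (𝕌 : Set (Euc m)) (𝔾 : Set (Euc n)) (L : Euc n → Euc m → ℝ)
    (Lbar : ℝ) : Prop :=
  (∀ x ∈ 𝔾, ∀ u ∈ 𝕌, 0 ≤ L x u ∧ L x u ≤ Lbar) ∧
    L 0 0 = 0 ∧ (∀ x, x ≠ 0 → 0 < L x 0) ∧ (∀ x u, L x 0 ≤ L x u)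

/-- A closed-loop trajectory `(x_k, z_k)` of the MPC law: at each instant an optimal feasible
pair `(u*, q*)` with minimal horizon among optimal pairs is applied (first control only), and
the internal state `z` is updated by `z⁺ = z` if `W(x) > z` and `z⁺ = β z` otherwise. -/
def ClosedLoop {n m : ℕ} (f : Euc n → Euc m → Euc n) (𝕌 : Set (Euc m)) (𝔾 : Set (Euc n))
    (N : ℕ) (L : Euc n → Euc m → ℝ) (W : Euc n → ℝ) (α β : ℝ)
    (x : ℕ → Euc n) (z : ℕ → ℝ) : Prop :=
  (∀ k, ∃ (ustar : ℕ → Euc m) (qstar : ℕ),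
      Feasible f 𝕌 𝔾 N (x k) ustar qstar ∧
      Jcost f L W α (x k) (z k) ustar qstar = Jstar f 𝕌 𝔾 N L W α (x k) (z k) ∧
      (∀ u q, Feasible f 𝕌 𝔾 N (x k) u q →
        Jcost f L W α (x k) (z k) u q = Jstar f 𝕌 𝔾 N L W α (x k) (z k) → qstar ≤ q) ∧
      x (k + 1) = f (x k) (ustar 0)) ∧
  ∀ k, z (k + 1) = if z k < W (x k) then z k else β * z k



lemma traj_shift' {n m : ℕ} (f : Euc n → Euc m → Euc n) (x : Euc n) (u : ℕ → Euc m) :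
    ∀ ℓ, traj f (f x (u 0)) (fun i => u (i + 1)) ℓ = traj f x u (ℓ + 1) := by
  intro ℓ
  induction ℓ with
  | zero => rfl
  | succ ℓ ih => simp only [traj, ih]

/-- under (A2) and (A3) with `α ≥ 2·N·L̄/(1−γ)`, along any closed-loop
trajectory `(x_k, z_k)`, if `W(x_k) > z_k` and `W(x_{k+1}) > z_{k+1}` then
`J*(x_{k+1}, z_{k+1}) ≤ J*(x_k, z_k) − z_k·Q(x_{k+1})`. -/
theorem Jstar_decrease_along_closed_loop {n m : ℕ}
    (f : Euc n → Euc m → Euc n) (𝕌 : Set (Euc m)) (𝔾 : Set (Euc n))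
    (W : Euc n → ℝ) (L : Euc n → Euc m → ℝ) (γ Lbar α β : ℝ) (N : ℕ)
    (hf0 : f 0 0 = 0) (hUcomp : IsCompact 𝕌) (hU0 : (0 : Euc m) ∈ 𝕌)
    (hG0 : (0 : Euc n) ∈ 𝔾)
    (hA2 : A2 f 𝕌 𝔾 W γ N) (hA3 : A3 𝕌 𝔾 L Lbar)
    (hα : 0 < α) (hαbig : 2 * N * Lbar / (1 - γ) ≤ α) (hβ : β ∈ Set.Ioo (0 : ℝ) 1)
    (x : ℕ → Euc n) (z : ℕ → ℝ) (hx0 : x 0 ∈ 𝔾) (hz0 : 0 < z 0)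
    (hcl : ClosedLoop f 𝕌 𝔾 N L W α β x z) :
    ∀ k, z k < W (x k) → z (k + 1) < W (x (k + 1)) →
      Jstar f 𝕌 𝔾 N L W α (x (k + 1)) (z (k + 1)) ≤
        Jstar f 𝕌 𝔾 N L W α (x k) (z k) - z k * L (x (k + 1)) 0 := by
  classical
  obtain ⟨hWcont, hW0, hWpos, ⟨hγ0, hγ1⟩, hN1, hA2c⟩ := hA2
  obtain ⟨hLbnd, hL00, hQpos, hQle⟩ := hA3
  have hWnn : ∀ y, 0 ≤ W y := by
    intro y
    by_cases hy : y = 0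
    · simp [hy, hW0]
    · exact (hWpos y hy).le
  have hLbar0 : 0 ≤ Lbar := le_trans (hLbnd 0 hG0 0 hU0).1 (hLbnd 0 hG0 0 hU0).2
  have hzpos : ∀ k, 0 < z k := by
    intro k
    induction k with
    | zero => exact hz0
    | succ k ih =>
      rw [hcl.2 k]
      split
      · exact ih
      · exact mul_pos hβ.1 ih
  intro k hk hk1
  have hz1 : z (k + 1) = z k := by rw [hcl.2 k, if_pos hk]
  obtain ⟨us, qs, hfeas, hJeq, hmin, hx1⟩ := hcl.1 k
  obtain ⟨hU, hq1, hqN, hGfeas⟩ := hfeas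
  have hx1t : x (k + 1) = traj f (x k) us 1 := by rw [hx1]; rfl
  have hx1G : x (k + 1) ∈ 𝔾 := by rw [hx1t]; exact hGfeas 1 ⟨le_refl 1, hq1⟩
  have hzk : 0 < z k := hzpos k
  -- bounded below of cost set at (x(k+1), z k)
  have hbdd : BddBelow {c | ∃ u q, Feasible f 𝕌 𝔾 N (x (k+1)) u q ∧
      c = Jcost f L W α (x (k+1)) (z k) u q} := by
    refine ⟨0, ?_⟩
    rintro c ⟨u, q, ⟨huU, hq1', hqN', hG'⟩, rfl⟩
    have hPhi : 0 ≤ Phi f L (x (k+1)) u q := by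
      apply Finset.sum_nonneg
      intro i hi
      have hmem : i + 1 ∈ Set.Icc 1 q := ⟨Nat.le_add_left 1 i, Finset.mem_range.mp hi⟩
      exact (hLbnd _ (hG' (i+1) hmem) _ (huU i)).1
    have hWl : 0 ≤ Wlow f W (x (k+1)) u q := by
      simp only [Wlow]
      refine le_csInf ⟨W (traj f (x (k+1)) u 1), ⟨1, ⟨le_refl 1, hq1'⟩, rfl⟩⟩ ?_
      rintro b ⟨ℓ, hℓ, rfl⟩
      exact hWnn _
    exact add_nonneg (mul_nonneg hzk.le hPhi) (mul_nonneg hα.le hWl)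
  rw [hz1] at hk1 ⊢
  rw [← hJeq]
  -- analyze the min of W along the optimal trajectory
  set S : Set ℝ := (fun ℓ => W (traj f (x k) us ℓ)) '' Set.Icc 1 qs with hS
  have hSfin : S.Finite := (Set.finite_Icc 1 qs).image _
  have hSne : S.Nonempty := ⟨_, ⟨1, ⟨le_refl 1, hq1⟩, rfl⟩⟩
  have hWlows : Wlow f W (x k) us qs = sInf S := rfl
  obtain ⟨ℓ0, hℓ0mem, hℓ0eq⟩ := hSne.csInf_mem hSfin
  have hJc : Jcost f L W α (x k) (z k) us qs
      = z k * Phi f L (x k) us qs + α * sInf S := rfl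
  have hΦ0 : L (x (k+1)) (us 0) ≤ Phi f L (x k) us qs := by
    rw [hx1t]
    have h0 : (0 : ℕ) ∈ Finset.range qs := Finset.mem_range.mpr hq1
    refine Finset.single_le_sum (f := fun i => L (traj f (x k) us (i+1)) (us i)) ?_ h0
    intro i hi
    have hmem : i + 1 ∈ Set.Icc 1 qs := ⟨Nat.le_add_left 1 i, Finset.mem_range.mp hi⟩
    exact (hLbnd _ (hGfeas (i+1) hmem) _ (hU i)).1
  by_cases hℓ0case : 2 ≤ ℓ0
  · -- shifted control argument
    have hq2 : 2 ≤ qs := le_trans hℓ0case hℓ0mem.2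
    set u' : ℕ → Euc m := fun i => us (i + 1) with hu'
    have htr : ∀ ℓ, traj f (x (k+1)) u' ℓ = traj f (x k) us (ℓ + 1) := by
      intro ℓ
      rw [hx1]
      exact traj_shift' f (x k) us ℓ
    have hfeas' : Feasible f 𝕌 𝔾 N (x (k+1)) u' (qs - 1) := by
      refine ⟨fun i => hU (i+1), by omega, by omega, ?_⟩
      rintro ℓ ⟨hl1, hl2⟩
      rw [htr ℓ]
      exact hGfeas (ℓ+1) ⟨by omega, by omega⟩
    have hJle : Jstar f 𝕌 𝔾 N L W α (x (k+1)) (z k)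
        ≤ Jcost f L W α (x (k+1)) (z k) u' (qs - 1) :=
      csInf_le hbdd ⟨u', qs - 1, hfeas', rfl⟩
    -- Phi of the shifted pair
    have hΦ' : Phi f L (x (k+1)) u' (qs - 1)
        = Phi f L (x k) us qs - L (x (k+1)) (us 0) := by
      have hsum := Finset.sum_range_succ'
        (fun i => L (traj f (x k) us (i + 1)) (us i)) (qs - 1)
      rw [show qs - 1 + 1 = qs by omega] at hsum
      have hterm : ∀ i ∈ Finset.range (qs - 1),
          L (traj f (x (k+1)) u' (i + 1)) (u' i)
          = L (traj f (x k) us (i + 1 + 1)) (us (i + 1)) := by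
        intro i _
        rw [htr (i+1)]
      simp only [Phi]
      rw [Finset.sum_congr rfl hterm, hsum, hx1t]
      simp
    -- Wlow of the shifted pair
    have hS2fin : ((fun ℓ => W (traj f (x k) us ℓ)) '' Set.Icc 2 qs).Finite :=
      (Set.finite_Icc 2 qs).image _
    have hSet : (fun ℓ => W (traj f (x (k+1)) u' ℓ)) '' Set.Icc 1 (qs - 1)
        = (fun ℓ => W (traj f (x k) us ℓ)) '' Set.Icc 2 qs := by
      ext c
      constructor
      · rintro ⟨ℓ, ⟨h1, h2⟩, rfl⟩
        refine ⟨ℓ + 1, ⟨by omega, by omega⟩, ?_⟩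
        show W (traj f (x k) us (ℓ + 1)) = W (traj f (x (k+1)) u' ℓ)
        rw [htr ℓ]
      · rintro ⟨ℓ, ⟨h1, h2⟩, rfl⟩
        refine ⟨ℓ - 1, ⟨by omega, by omega⟩, ?_⟩
        show W (traj f (x (k+1)) u' (ℓ - 1)) = W (traj f (x k) us ℓ)
        rw [htr (ℓ-1), show ℓ - 1 + 1 = ℓ from by omega]
    have hWl' : Wlow f W (x (k+1)) u' (qs - 1) ≤ sInf S := by
      simp only [Wlow]
      rw [hSet, ← hℓ0eq]
      exact csInf_le hS2fin.bddBelow ⟨ℓ0, ⟨hℓ0case, hℓ0mem.2⟩, rfl⟩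
    have hQ : L (x (k+1)) 0 ≤ L (x (k+1)) (us 0) := hQle _ _
    have : Jcost f L W α (x (k+1)) (z k) u' (qs - 1)
        = z k * (Phi f L (x k) us qs - L (x (k+1)) (us 0))
          + α * Wlow f W (x (k+1)) u' (qs - 1) := by rw [Jcost, hΦ']
    rw [this] at hJle
    have hαW : α * Wlow f W (x (k+1)) u' (qs - 1) ≤ α * sInf S :=
      mul_le_mul_of_nonneg_left hWl' hα.le
    have hzQ : z k * L (x (k+1)) 0 ≤ z k * L (x (k+1)) (us 0) :=
      mul_le_mul_of_nonneg_left hQ hzk.le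
    rw [hJc]
    have hexp : z k * (Phi f L (x k) us qs - L (x (k+1)) (us 0))
        = z k * Phi f L (x k) us qs - z k * L (x (k+1)) (us 0) := by ring
    linarith [hJle, hαW, hzQ, hexp.le, hexp.ge]
  · -- the min is W(x(k+1)); use the A2 contraction from x(k+1)
    have hℓ01 : ℓ0 = 1 := by
      have := hℓ0mem.1
      omega
    have hSval : sInf S = W (x (k+1)) := by
      rw [← hℓ0eq, hℓ01, hx1t]
    obtain ⟨ub, hubU, hubG, hubW⟩ := hA2c _ hx1G
    have hfeas' : Feasible f 𝕌 𝔾 N (x (k+1)) ub N := ⟨hubU, hN1, le_refl N, hubG⟩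
    have hJle : Jstar f 𝕌 𝔾 N L W α (x (k+1)) (z k)
        ≤ Jcost f L W α (x (k+1)) (z k) ub N :=
      csInf_le hbdd ⟨ub, N, hfeas', rfl⟩
    have hΦb : Phi f L (x (k+1)) ub N ≤ N * Lbar := by
      calc Phi f L (x (k+1)) ub N
          ≤ ∑ _i ∈ Finset.range N, Lbar := by
            apply Finset.sum_le_sum
            intro i hi
            have hmem : i + 1 ∈ Set.Icc 1 N := ⟨Nat.le_add_left 1 i, Finset.mem_range.mp hi⟩
            exact (hLbnd _ (hubG (i+1) hmem) _ (hubU i)).2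
        _ = N * Lbar := by rw [Finset.sum_const, Finset.card_range]; ring
    have hJcb : Jcost f L W α (x (k+1)) (z k) ub N
        ≤ z k * (N * Lbar) + α * (γ * W (x (k+1))) := by
      refine add_le_add (mul_le_mul_of_nonneg_left hΦb hzk.le)
        (mul_le_mul_of_nonneg_left hubW hα.le)
    have hαγ : 2 * N * Lbar ≤ α * (1 - γ) := by
      rw [div_le_iff₀ (by linarith)] at hαbig
      exact hαbig
    have hNL : (0 : ℝ) ≤ N * Lbar := mul_nonneg (Nat.cast_nonneg N) hLbar0
    have hWx1 : z k < W (x (k+1)) := hk1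
    have hkey : z k * (N * Lbar) ≤ α * (1 - γ) * W (x (k+1)) := by
      calc z k * (N * Lbar) ≤ W (x (k+1)) * (N * Lbar) :=
            mul_le_mul_of_nonneg_right hWx1.le hNL
        _ ≤ W (x (k+1)) * (α * (1 - γ)) :=
            mul_le_mul_of_nonneg_left (by linarith) (hWnn _)
        _ = α * (1 - γ) * W (x (k+1)) := by ring
    have hQ : L (x (k+1)) 0 ≤ L (x (k+1)) (us 0) := hQle _ _
    have hzΦ : z k * L (x (k+1)) (us 0) ≤ z k * Phi f L (x k) us qs :=
      mul_le_mul_of_nonneg_left hΦ0 hzk.le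
    have hzQ : z k * L (x (k+1)) 0 ≤ z k * L (x (k+1)) (us 0) :=
      mul_le_mul_of_nonneg_left hQ hzk.le
    rw [hJc, hSval]
    have hexp : α * (1 - γ) * W (x (k+1))
        = α * W (x (k+1)) - α * (γ * W (x (k+1))) := by ring
    linarith [hJle, hJcb, hkey, hzΦ, hzQ, hexp.le, hexp.ge]
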